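/- arXiv:1605.09500 — 2 statements merged into one kernel-verified Lean document; each statement's English description precedes it below -/
import Mathlib

section
/- Let p = 2, m ≥ 1, k = 2^m - 2 (so k is even), and K a field of characteristic 2. Define Gz(f,g) = Σ_{i=0}^{k/2 - 1} (f^{(i)} g^{(k-i)} + f^{(k-i)} g^{(i)}) + f^{(k/2)} g^{(k/2)} in the divided power algebra O(1;N) with 2^N > k/2 (i.e., m ≤ N+1). Then Gz : F_1 ⊗ F_1 → F_k is invariant under vect(1;N): L_D(Gz(f,g)) = Gz(L_D f, g) + Gz(f, L_D g) for all D ∈ vect(1;N). -/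
open Finset

/-- Multiplication in the divided power algebra `O(1;N)` truncated at `n = p^N`;
elements are given by their coefficients in the basis `u^{(r)}`, `0 ≤ r < n`,
and `u^{(r)} · u^{(s)} = C(r+s, r) u^{(r+s)}` (zero if `r+s ≥ n`). -/
def dpMul {K : Type*} [Field K] (n : ℕ) (f g : ℕ → K) : ℕ → K :=
  fun t => if t < n then ∑ i ∈ Finset.range (t + 1), ((t.choose i : K) * f i * g (t - i)) else 0

/-- The distinguished derivation `∂` of `O(1;N)`: `∂(u^{(r)}) = u^{(r-1)}`. -/
def dpDer {K : Type*} [Field K] (n : ℕ) (f : ℕ → K) : ℕ → K :=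
  fun r => if r + 1 < n then f (r + 1) else 0

/-- Membership in `O(1;N)`: coefficients vanish in degrees `≥ n`. -/
def dpSupp {K : Type*} [Field K] (n : ℕ) (f : ℕ → K) : Prop := ∀ r, n ≤ r → f r = 0

/-- Berezin-type integral: the coefficient of `u^{(n-1)}`. -/
def dpInt {K : Type*} [Field K] (n : ℕ) (f : ℕ → K) : K := f (n - 1)

/-- Lie derivative along `h∂ ∈ vect(1;N)` acting on the weighted density module
`F_a`: `L_{h∂}(f) = h·∂f + a·f·∂h`. -/
def dpLie {K : Type*} [Field K] (n : ℕ) (a : K) (h f : ℕ → K) : ℕ → K :=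
  dpMul n h (dpDer n f) + a • dpMul n f (dpDer n h)

/-- The characteristic-2 analog of the Grozman operator, k = 2^m - 2 even:
Gz(f,g) = Σ_{i=0}^{k/2-1} (f^{(i)} g^{(k-i)} + f^{(k-i)} g^{(i)}) + f^{(k/2)} g^{(k/2)}. -/
def GzTwo {K : Type*} [Field K] (n k : ℕ) (f g : ℕ → K) : ℕ → K :=
  (∑ i ∈ Finset.range (k / 2),
    (dpMul n ((dpDer n)^[i] f) ((dpDer n)^[k - i] g)
      + dpMul n ((dpDer n)^[k - i] f) ((dpDer n)^[i] g)))
  + dpMul n ((dpDer n)^[k / 2] f) ((dpDer n)^[k / 2] g)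

/-!
With `M = k + 1 = 2 ^ m - 1` every `C(M, i)` is odd, so in characteristic 2 the Leibniz rule gives
`Σ_{i+j=M} φ^{(i)} ψ^{(j)} = ∂^M (φψ)`. As `k` is even, `Gz(f, g) = Σ_{i+j=k} f^{(i)} g^{(j)}`, the
weight term of `L_{h∂}` on `F_k` vanishes, and on `F_1` we have `L_{h∂} f = ∂(hf)`. Shifting indices,
`Gz(∂φ, g) = ∂^M(φg) - φ g^{(M)}` and `Gz(f, ∂ψ) = ∂^M(fψ) - f^{(M)} ψ`; together with
`∂ Gz(f, g) = Gz(∂f, g) + Gz(f, ∂g)` this turns both sides of the identity into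
`h f g^{(M)} + h f^{(M)} g` plus terms that occur twice.
-/

section Product

variable {K : Type*} [Field K] (n : ℕ)

theorem dpMul_apply (f g : ℕ → K) (t : ℕ) :
    dpMul n f g t =
      if t < n then ∑ q ∈ antidiagonal t, (t.choose q.1 : K) * f q.1 * g q.2 else 0 := by
  rw [dpMul, Nat.sum_antidiagonal_eq_sum_range_succ_mk]

theorem dpMul_comm (f g : ℕ → K) : dpMul n f g = dpMul n g f := by
  ext t
  simp only [dpMul_apply]
  congr 1
  rw [← Nat.sum_antidiagonal_swap]
  refine sum_congr rfl fun q hq => ?_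
  rw [Prod.fst_swap, Prod.snd_swap, Nat.choose_symm_of_eq_add (mem_antidiagonal.1 hq).symm]
  ring

theorem Nat.choose_add_mul_choose (a b c : ℕ) :
    (a + b + c).choose (a + b) * (a + b).choose a = (a + b + c).choose a * (b + c).choose b := by
  rw [Nat.choose_mul (Nat.le_add_right a b)]
  congr 2 <;> omega

theorem dpMul_assoc (f g h : ℕ → K) :
    dpMul n (dpMul n f g) h = dpMul n f (dpMul n g h) := by
  ext t
  simp only [dpMul_apply]
  split_ifs with ht
  swap
  · rfl
  calc ∑ q ∈ antidiagonal t, (t.choose q.1 : K) *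
          (if q.1 < n then ∑ r ∈ antidiagonal q.1, (q.1.choose r.1 : K) * f r.1 * g r.2 else 0) *
          h q.2
      = ∑ q ∈ antidiagonal t, ∑ r ∈ antidiagonal q.1,
          ((t.choose q.1 * q.1.choose r.1 : ℕ) : K) * f r.1 * g r.2 * h q.2 := by
        refine sum_congr rfl fun q hq => ?_
        rw [if_pos (by have := mem_antidiagonal.1 hq; omega), mul_sum, sum_mul]
        refine sum_congr rfl fun r _ => ?_
        push_cast
        ring
    _ = ∑ q ∈ antidiagonal t, ∑ r ∈ antidiagonal q.2,
          ((t.choose q.1 * q.2.choose r.1 : ℕ) : K) * f q.1 * g r.1 * h r.2 := by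
        simp only [sum_sigma']
        refine sum_nbij' (fun x => ⟨(x.2.1, x.2.2 + x.1.2), (x.2.2, x.1.2)⟩)
          (fun x => ⟨(x.1.1 + x.2.1, x.2.2), (x.1.1, x.2.1)⟩) ?_ ?_ ?_ ?_ ?_ <;>
        rintro ⟨⟨_, _⟩, ⟨_, _⟩⟩ hx <;>
        simp only [mem_sigma, HasAntidiagonal.mem_antidiagonal, and_true] at hx ⊢
        · omega
        · omega
        all_goals obtain ⟨rfl, rfl⟩ := hx
        · rfl
        · rfl
        · rw [Nat.choose_add_mul_choose]
    _ = ∑ q ∈ antidiagonal t, (t.choose q.1 : K) * f q.1 *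
          (if q.2 < n then ∑ r ∈ antidiagonal q.2, (q.2.choose r.1 : K) * g r.1 * h r.2 else 0) := by
        refine sum_congr rfl fun q hq => ?_
        rw [if_pos (by have := mem_antidiagonal.1 hq; omega), mul_sum]
        refine sum_congr rfl fun r _ => ?_
        push_cast
        ring

theorem dpMul_left_comm (f g h : ℕ → K) :
    dpMul n f (dpMul n g h) = dpMul n g (dpMul n f h) := by
  rw [← dpMul_assoc, dpMul_comm n f g, dpMul_assoc]

theorem dpMul_add_right (f g g' : ℕ → K) :
    dpMul n f (g + g') = dpMul n f g + dpMul n f g' := by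
  ext t
  simp only [dpMul, Pi.add_apply]
  split_ifs
  · rw [← sum_add_distrib]
    exact sum_congr rfl fun _ _ => mul_add _ _ _
  · rw [add_zero]

theorem dpMul_sub_right (f g g' : ℕ → K) :
    dpMul n f (g - g') = dpMul n f g - dpMul n f g' :=
  map_sub (AddMonoidHom.mk' (dpMul n f) (dpMul_add_right n f)) g g'

end Product

section Derivation

variable {K : Type*} [Field K]

theorem dpDer_add (n : ℕ) (f g : ℕ → K) : dpDer n (f + g) = dpDer n f + dpDer n g := by
  ext r
  simp only [dpDer, Pi.add_apply]
  split_ifs <;> simp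

theorem dpDer_sum (n : ℕ) {ι : Type*} (s : Finset ι) (F : ι → ℕ → K) :
    dpDer n (∑ i ∈ s, F i) = ∑ i ∈ s, dpDer n (F i) :=
  map_sum (AddMonoidHom.mk' (dpDer n) (dpDer_add n)) F s

theorem dpDer_nsmul (n c : ℕ) (f : ℕ → K) : dpDer n (c • f) = c • dpDer n f :=
  map_nsmul (AddMonoidHom.mk' (dpDer n) (dpDer_add n)) c f

theorem Nat.Prime.cast_choose_pow_eq_zero {p : ℕ} (hp : p.Prime) [CharP K p] (N : ℕ) {i : ℕ}
    (hi₀ : i ≠ 0) (hi : i ≠ p ^ N) : ((p ^ N).choose i : K) = 0 :=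
  (CharP.cast_eq_zero_iff K p _).2 (hp.dvd_choose_pow hi₀ hi)

theorem Nat.Prime.cast_choose_pow_sub_one {p : ℕ} (hp : p.Prime) [CharP K p] (N : ℕ) {i : ℕ}
    (hi : i < p ^ N) : ((p ^ N - 1).choose i : K) = (-1) ^ i := by
  induction i with
  | zero => simp
  | succ i ih =>
    have hpascal : ((p ^ N - 1).choose i : K) + (p ^ N - 1).choose (i + 1) = 0 := by
      rw [← Nat.cast_add, ← Nat.choose_succ_succ', Nat.sub_add_cancel (by omega),
        hp.cast_choose_pow_eq_zero N (by omega) (by omega)]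
    rw [pow_succ, mul_neg_one, ← ih (by omega)]
    linear_combination hpascal

variable {p : ℕ} [CharP K p] (N : ℕ)

/-- `dpDer` never reads the coefficient in degree `p ^ N`, and in the top degree `p ^ N - 1` the
right-hand side is `Σ_{0<i<p^N} C(p^N, i) f_i g_{p^N-i} = 0`. -/
theorem dpDer_dpMul (hp : p.Prime) (f g : ℕ → K) :
    dpDer (p ^ N) (dpMul (p ^ N) f g)
      = dpMul (p ^ N) (dpDer (p ^ N) f) g + dpMul (p ^ N) f (dpDer (p ^ N) g) := by
  set n := p ^ N
  set f' := (Set.Iio n).indicator f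
  set g' := (Set.Iio n).indicator g
  have hf' : ∀ i, dpDer n f i = f' (i + 1) := fun i => by
    simp [dpDer, f', Set.indicator_apply]
  have hg' : ∀ i, dpDer n g i = g' (i + 1) := fun i => by
    simp [dpDer, g', Set.indicator_apply]
  ext r
  by_cases hr : r < n
  swap
  · simp [dpDer, dpMul, hr, show ¬ r + 1 < n by omega]
  have hpascal : (dpMul n (dpDer n f) g + dpMul n f (dpDer n g)) r
      = ∑ i ∈ range (r + 2), ((r + 1).choose i : K) * (f' i * g' (r + 1 - i)) := by
    rw [sum_choose_succ_mul (fun i j => f' i * g' j), Pi.add_apply, add_comm, dpMul, dpMul,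
      if_pos hr, if_pos hr]
    congr 1 <;> refine sum_congr rfl fun i hi => ?_ <;> rw [mem_range] at hi
    · rw [hg', show f i = f' i by simp [f', Set.indicator_apply]; omega,
        show r - i + 1 = r + 1 - i by omega]
      ring
    · rw [hf', show g (r - i) = g' (r - i) by simp [g', Set.indicator_apply]; omega]
      ring
  rw [hpascal, dpDer]
  by_cases hr₁ : r + 1 < n
  · rw [if_pos hr₁, dpMul, if_pos hr₁]
    refine sum_congr rfl fun i hi => ?_
    rw [mem_range] at hi
    simp only [f', g', Set.indicator_apply, Set.mem_Iio, if_pos (show i < n by omega),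
      if_pos (show r + 1 - i < n by omega)]
    ring
  · have hn : r + 1 = p ^ N := by omega
    rw [if_neg hr₁]
    refine (sum_eq_zero fun i hi => ?_).symm
    rw [mem_range] at hi
    by_cases hi₀ : i = 0
    · simp [hi₀, g', hr₁]
    by_cases hin : i = r + 1
    · simp [hin, f', hr₁]
    rw [hn, hp.cast_choose_pow_eq_zero N hi₀ (hn ▸ hin), zero_mul]

theorem iterate_dpDer_dpMul (hp : p.Prime) (f g : ℕ → K) (k : ℕ) :
    (dpDer (p ^ N))^[k] (dpMul (p ^ N) f g) = ∑ q ∈ antidiagonal k,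
      k.choose q.1 • dpMul (p ^ N) ((dpDer (p ^ N))^[q.1] f) ((dpDer (p ^ N))^[q.2] g) := by
  induction k with
  | zero => simp
  | succ k ih =>
    rw [sum_antidiagonal_choose_succ_nsmul
      (fun i j => dpMul (p ^ N) ((dpDer (p ^ N))^[i] f) ((dpDer (p ^ N))^[j] g)) k]
    simp only [Function.iterate_succ_apply', ih, dpDer_sum, dpDer_nsmul, dpDer_dpMul N hp,
      smul_add, sum_add_distrib]
    rw [add_comm]
    congr 1
    refine sum_congr rfl fun q hq => ?_
    rw [Nat.choose_symm_of_eq_add (mem_antidiagonal.1 hq).symm]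

theorem dpLie_one_eq_dpDer_dpMul (hp : p.Prime) (h f : ℕ → K) :
    dpLie (p ^ N) 1 h f = dpDer (p ^ N) (dpMul (p ^ N) h f) := by
  rw [dpLie, one_smul, dpDer_dpMul N hp, add_comm, dpMul_comm _ f]

end Derivation

def dpAntidiagSum {K : Type*} [Field K] (n k : ℕ) (f g : ℕ → K) : ℕ → K :=
  ∑ q ∈ antidiagonal k, dpMul n ((dpDer n)^[q.1] f) ((dpDer n)^[q.2] g)

theorem Finset.Nat.sum_antidiagonal_add_self {M : Type*} [AddCommMonoid M] (B : ℕ → ℕ → M)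
    (q : ℕ) : ∑ x ∈ antidiagonal (q + q), B x.1 x.2
      = ∑ i ∈ range q, (B i (q + q - i) + B (q + q - i) i) + B q q := by
  have hmirror : ∑ i ∈ range q, B (q + q - i) i = ∑ j ∈ Ico (q + 1) (q + q + 1), B j (q + q - j) :=
    calc ∑ i ∈ range q, B (q + q - i) i
        = ∑ i ∈ Ico 0 q, B (q + q - i) (q + q - (q + q - i)) := by
          rw [range_eq_Ico]
          refine sum_congr rfl fun i hi => ?_
          rw [mem_Ico] at hi
          rw [show q + q - (q + q - i) = i by omega]
      _ = ∑ j ∈ Ico (q + 1) (q + q + 1), B j (q + q - j) := by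
          rw [sum_Ico_reflect (fun j => B j (q + q - j)) 0 (by omega),
            show q + q + 1 - q = q + 1 by omega, Nat.sub_zero]
  rw [Nat.sum_antidiagonal_eq_sum_range_succ B, sum_add_distrib, hmirror, add_right_comm,
    show B q q = B q (q + q - q) by rw [Nat.add_sub_cancel], ← sum_range_succ,
    sum_range_add_sum_Ico _ (by omega)]

section AntidiagSum

variable {K : Type*} [Field K]

theorem GzTwo_eq_dpAntidiagSum (n : ℕ) {k : ℕ} (hk : Even k) (f g : ℕ → K) :
    GzTwo n k f g = dpAntidiagSum n k f g := by
  obtain ⟨q, rfl⟩ := hk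
  rw [GzTwo, dpAntidiagSum, show (q + q) / 2 = q by omega,
    Finset.Nat.sum_antidiagonal_add_self (fun i j => dpMul n ((dpDer n)^[i] f) ((dpDer n)^[j] g))]

theorem dpAntidiagSum_dpDer_left (n k : ℕ) (f g : ℕ → K) :
    dpAntidiagSum n k (dpDer n f) g
      = dpAntidiagSum n (k + 1) f g - dpMul n f ((dpDer n)^[k + 1] g) := by
  rw [eq_sub_iff_add_eq', dpAntidiagSum, dpAntidiagSum, Nat.sum_antidiagonal_succ]
  simp only [Function.iterate_succ_apply, Function.iterate_zero_apply]

theorem dpAntidiagSum_dpDer_right (n k : ℕ) (f g : ℕ → K) :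
    dpAntidiagSum n k f (dpDer n g)
      = dpAntidiagSum n (k + 1) f g - dpMul n ((dpDer n)^[k + 1] f) g := by
  rw [eq_sub_iff_add_eq', dpAntidiagSum, dpAntidiagSum, Nat.sum_antidiagonal_succ']
  simp only [Function.iterate_succ_apply, Function.iterate_zero_apply]

theorem dpDer_dpAntidiagSum {p : ℕ} (hp : p.Prime) [CharP K p] (N k : ℕ) (f g : ℕ → K) :
    dpDer (p ^ N) (dpAntidiagSum (p ^ N) k f g)
      = dpAntidiagSum (p ^ N) k (dpDer (p ^ N) f) g
        + dpAntidiagSum (p ^ N) k f (dpDer (p ^ N) g) := by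
  simp only [dpAntidiagSum, dpDer_sum, dpDer_dpMul N hp, sum_add_distrib,
    ← Function.iterate_succ_apply, Function.iterate_succ_apply']

theorem dpAntidiagSum_two_pow_sub_one [CharP K 2] (N m : ℕ) (f g : ℕ → K) :
    dpAntidiagSum (2 ^ N) (2 ^ m - 1) f g
      = (dpDer (2 ^ N))^[2 ^ m - 1] (dpMul (2 ^ N) f g) := by
  rw [iterate_dpDer_dpMul N Nat.prime_two, dpAntidiagSum]
  refine sum_congr rfl fun q hq => ?_
  have hq₁ : q.1 < 2 ^ m := by
    have := mem_antidiagonal.1 hq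
    have := Nat.one_le_two_pow (n := m)
    omega
  rw [← Nat.cast_smul_eq_nsmul K, Nat.prime_two.cast_choose_pow_sub_one m hq₁, CharTwo.neg_eq,
    one_pow, one_smul]

end AntidiagSum

theorem GzTwo_invariant_general {K : Type*} [Field K] (m N : ℕ) (hm : 1 ≤ m)
    [CharP K 2] (k : ℕ) (hk : k = 2 ^ m - 2)
    (h f g : ℕ → K) :
    dpLie (2 ^ N) (k : K) h (GzTwo (2 ^ N) k f g)
      = GzTwo (2 ^ N) k (dpLie (2 ^ N) 1 h f) g
        + GzTwo (2 ^ N) k f (dpLie (2 ^ N) 1 h g) := by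
  have hk_even : Even k := ⟨2 ^ (m - 1) - 1, by
    rw [hk, ← Nat.two_mul, Nat.mul_sub, ← pow_succ', Nat.sub_add_cancel hm]⟩
  have hk_succ : k + 1 = 2 ^ m - 1 := by
    have := Nat.pow_le_pow_right two_pos hm
    omega
  have hk_zero : (k : K) = 0 := (CharP.cast_eq_zero_iff K 2 k).2 hk_even.two_dvd
  rw [dpLie, hk_zero, zero_smul, add_zero, dpLie_one_eq_dpDer_dpMul N Nat.prime_two,
    dpLie_one_eq_dpDer_dpMul N Nat.prime_two]
  simp only [GzTwo_eq_dpAntidiagSum _ hk_even, dpDer_dpAntidiagSum Nat.prime_two,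
    dpAntidiagSum_dpDer_left, dpAntidiagSum_dpDer_right, hk_succ, dpAntidiagSum_two_pow_sub_one]
  set n := 2 ^ N
  set D : (ℕ → K) → ℕ → K := (dpDer n)^[2 ^ m - 1]
  rw [dpMul_add_right, dpMul_sub_right, dpMul_sub_right, dpMul_assoc, dpMul_assoc,
    dpMul_left_comm n f h, dpMul_left_comm n (D f) h]
  linear_combination (dpMul n h (D (dpMul n f g)) - D (dpMul n h (dpMul n f g))) *
    (CharTwo.two_eq_zero : (2 : ℕ → K) = 0)

/-- Gz : F_1 ⊗ F_1 → F_k is vect(1;N)-invariant in characteristic 2. -/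
theorem GzTwo_invariant {K : Type*} [Field K] (m N : ℕ) (hm : 1 ≤ m)
    [CharP K 2] (k : ℕ) (hk : k = 2 ^ m - 2) (hkN : k / 2 < 2 ^ N)
    (h f g : ℕ → K)
    (hh : dpSupp (2 ^ N) h) (hf : dpSupp (2 ^ N) f) (hg : dpSupp (2 ^ N) g) :
    dpLie (2 ^ N) (k : K) h (GzTwo (2 ^ N) k f g)
      = GzTwo (2 ^ N) k (dpLie (2 ^ N) 1 h f) g
        + GzTwo (2 ^ N) k f (dpLie (2 ^ N) 1 h g) :=
  GzTwo_invariant_general m N hm k hk h f g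
end

section
/- Let K be a field of characteristic p > 0 and a ∈ K. For (a, b) = (a, -1-a), the second-order operator D(f,g) = a·f·∂²g + (2a+1)·∂f·∂g + (a+1)·∂²f·g from F_a ⊗ F_{-1-a} to F_{a+1-a} = F_1 is vect(1;N)-invariant, being the composition ∂ ∘ {·,·}_{P.B.} of the Poisson bracket with the derivative. -/
open Finset

/-- The second-order operator D(f,g) = a·f·∂²g + (2a+1)·∂f·∂g + (a+1)·∂²f·g,
the derivative of the Poisson bracket, F_a ⊗ F_{-1-a} → F_1. -/
def derPB {K : Type*} [Field K] (n : ℕ) (a : K) (f g : ℕ → K) : ℕ → K :=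
  a • dpMul n f (dpDer n (dpDer n g))
    + (2 * a + 1) • dpMul n (dpDer n f) (dpDer n g)
    + (a + 1) • dpMul n (dpDer n (dpDer n f)) g

section DPAlgebra

variable {K : Type*} [Field K] {n : ℕ}

lemma dpMul_supp (f g : ℕ → K) : dpSupp n (dpMul n f g) :=
  fun r hr => if_neg (not_lt.2 hr)

lemma dpDer_supp (f : ℕ → K) : dpSupp n (dpDer n f) :=
  fun r hr => if_neg (by omega)

/-- The divided power algebra as a subtype of `ℕ → K`. -/
def DP (K : Type*) [Field K] (n : ℕ) : Type _ := {f : ℕ → K // dpSupp n f}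

namespace DP

instance : Add (DP K n) :=
  ⟨fun x y => ⟨x.1 + y.1, fun r hr => by
    simp [Pi.add_apply, x.2 r hr, y.2 r hr]⟩⟩

instance : Neg (DP K n) :=
  ⟨fun x => ⟨-x.1, fun r hr => by simp [Pi.neg_apply, x.2 r hr]⟩⟩

instance : Sub (DP K n) :=
  ⟨fun x y => ⟨x.1 - y.1, fun r hr => by
    simp [Pi.sub_apply, x.2 r hr, y.2 r hr]⟩⟩

instance : Zero (DP K n) := ⟨⟨0, fun _ _ => rfl⟩⟩

instance : SMul K (DP K n) :=
  ⟨fun c x => ⟨c • x.1, fun r hr => by simp [Pi.smul_apply, x.2 r hr]⟩⟩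

instance : SMul ℕ (DP K n) :=
  ⟨fun c x => ⟨c • x.1, fun r hr => by simp [Pi.smul_apply, x.2 r hr]⟩⟩

instance : SMul ℤ (DP K n) :=
  ⟨fun c x => ⟨c • x.1, fun r hr => by simp [Pi.smul_apply, x.2 r hr]⟩⟩

instance : Mul (DP K n) := ⟨fun x y => ⟨dpMul n x.1 y.1, dpMul_supp _ _⟩⟩

lemma val_injective : Function.Injective (Subtype.val : DP K n → (ℕ → K)) :=
  Subtype.val_injective

@[simp] lemma add_val (x y : DP K n) : (x + y).1 = x.1 + y.1 := rfl
@[simp] lemma mul_val (x y : DP K n) : (x * y).1 = dpMul n x.1 y.1 := rfl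
@[simp] lemma smul_val (c : K) (x : DP K n) : (c • x).1 = c • x.1 := rfl
@[simp] lemma zero_val : ((0 : DP K n)).1 = 0 := rfl

instance : AddCommGroup (DP K n) :=
  Function.Injective.addCommGroup (Subtype.val : DP K n → (ℕ → K))
    val_injective rfl (fun _ _ => rfl) (fun _ => rfl) (fun _ _ => rfl)
    (fun _ _ => rfl) (fun _ _ => rfl)

instance [NeZero n] : One (DP K n) :=
  ⟨⟨fun t => if t = 0 then 1 else 0, fun r hr => by
    have := NeZero.pos n
    simp only [if_neg (by omega : ¬ r = 0)]⟩⟩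

@[simp] lemma one_val [NeZero n] :
    ((1 : DP K n)).1 = fun t => if t = 0 then (1 : K) else 0 := rfl

lemma dpMul_comm (f g : ℕ → K) : dpMul n f g = dpMul n g f := by
  funext t
  unfold dpMul
  split_ifs with ht
  · rw [← Finset.sum_range_reflect]
    refine Finset.sum_congr rfl fun i hi => ?_
    have hi' : i ≤ t := by
      have := Finset.mem_range.1 hi; omega
    have h1 : t + 1 - 1 - i = t - i := by omega
    have h2 : t - (t - i) = i := Nat.sub_sub_self hi'
    rw [h1, h2, Nat.choose_symm hi']
    ring
  · rfl

lemma dpMul_assoc (x y z : ℕ → K) :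
    dpMul n (dpMul n x y) z = dpMul n x (dpMul n y z) := by
  funext t
  unfold dpMul
  split_ifs with ht
  case neg => rfl
  have step1 : ∑ s ∈ Finset.range (t + 1),
      ((t.choose s : K) *
        (if s < n then ∑ i ∈ Finset.range (s + 1), ((s.choose i : K) * x i * y (s - i)) else 0)
        * z (t - s))
      = ∑ s ∈ Finset.range (t + 1), ∑ i ∈ Finset.range (s + 1),
          ((t.choose i : K) * ((t - i).choose (s - i) : K) * x i * y (s - i) * z (t - s)) := by
    refine Finset.sum_congr rfl fun s hs => ?_
    have hs' : s ≤ t := by have := Finset.mem_range.1 hs; omega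
    rw [if_pos (lt_of_le_of_lt hs' ht), Finset.mul_sum, Finset.sum_mul]
    refine Finset.sum_congr rfl fun i hi => ?_
    have hi' : i ≤ s := by have := Finset.mem_range.1 hi; omega
    have hcc : (t.choose s : K) * (s.choose i : K)
        = (t.choose i : K) * ((t - i).choose (s - i) : K) := by
      rw [← Nat.cast_mul, ← Nat.cast_mul, Nat.choose_mul hi']
    calc (t.choose s : K) * ((s.choose i : K) * x i * y (s - i)) * z (t - s)
        = ((t.choose s : K) * (s.choose i : K)) * x i * y (s - i) * z (t - s) := by ring
      _ = ((t.choose i : K) * ((t - i).choose (s - i) : K)) * x i * y (s - i) * z (t - s) := by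
          rw [hcc]
      _ = (t.choose i : K) * ((t - i).choose (s - i) : K) * x i * y (s - i) * z (t - s) := by
          ring
  have step2 : ∑ i ∈ Finset.range (t + 1),
      ((t.choose i : K) * x i *
        (if t - i < n then
          ∑ j ∈ Finset.range (t - i + 1), (((t - i).choose j : K) * y j * z (t - i - j)) else 0))
      = ∑ i ∈ Finset.range (t + 1), ∑ j ∈ Finset.range (t - i + 1),
          ((t.choose i : K) * ((t - i).choose j : K) * x i * y j * z (t - i - j)) := by
    refine Finset.sum_congr rfl fun i hi => ?_
    rw [if_pos (by omega : t - i < n), Finset.mul_sum]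
    refine Finset.sum_congr rfl fun j hj => ?_
    ring
  rw [step1, step2, Finset.sum_sigma', Finset.sum_sigma']
  refine Finset.sum_nbij' (fun q => ⟨q.2, q.1 - q.2⟩) (fun q => ⟨q.1 + q.2, q.1⟩)
    ?_ ?_ ?_ ?_ ?_
  · rintro ⟨s, i⟩ hq
    simp only [Finset.mem_sigma, Finset.mem_range] at hq ⊢
    omega
  · rintro ⟨i, j⟩ hq
    simp only [Finset.mem_sigma, Finset.mem_range] at hq ⊢
    omega
  · rintro ⟨s, i⟩ hq
    simp only [Finset.mem_sigma, Finset.mem_range] at hq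
    have hs : i + (s - i) = s := by omega
    simp [hs]
  · rintro ⟨i, j⟩ hq
    simp only [Finset.mem_sigma, Finset.mem_range] at hq
    have hs : i + j - i = j := by omega
    simp [hs]
  · rintro ⟨s, i⟩ hq
    simp only [Finset.mem_sigma, Finset.mem_range] at hq
    have hts : t - i - (s - i) = t - s := by omega
    dsimp only
    rw [hts]

lemma dpMul_add (x y z : ℕ → K) :
    dpMul n x (y + z) = dpMul n x y + dpMul n x z := by
  funext t
  simp only [dpMul, Pi.add_apply]
  split_ifs with ht
  · rw [← Finset.sum_add_distrib]
    refine Finset.sum_congr rfl fun i hi => ?_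
    ring
  · simp

lemma dpMul_zero (x : ℕ → K) : dpMul n x 0 = 0 := by
  funext t
  simp [dpMul]

lemma dpMul_smul (c : K) (x y : ℕ → K) :
    dpMul n x (c • y) = c • dpMul n x y := by
  funext t
  simp only [dpMul, Pi.smul_apply, smul_eq_mul]
  split_ifs with ht
  · rw [Finset.mul_sum]
    refine Finset.sum_congr rfl fun i hi => ?_
    ring
  · simp

lemma one_mul' [NeZero n] (x : DP K n) : (1 : DP K n) * x = x := by
  refine val_injective ?_
  funext t
  show dpMul n _ x.1 t = x.1 t
  unfold dpMul
  split_ifs with ht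
  · rw [Finset.sum_eq_single_of_mem 0 (Finset.mem_range.2 (Nat.succ_pos t))]
    · simp [one_val]
    · intro i hi hine
      simp only [one_val]
      rw [if_neg hine]
      ring
  · exact (x.2 t (not_lt.1 ht)).symm

instance [NeZero n] : CommRing (DP K n) where
  __ := (inferInstance : AddCommGroup (DP K n))
  mul := (· * ·)
  one := 1
  left_distrib x y z := val_injective (dpMul_add x.1 y.1 z.1)
  right_distrib x y z := val_injective (by
    show dpMul n (x.1 + y.1) z.1 = dpMul n x.1 z.1 + dpMul n y.1 z.1
    rw [dpMul_comm (x.1 + y.1) z.1, dpMul_add,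
      dpMul_comm z.1 x.1, dpMul_comm z.1 y.1])
  zero_mul x := val_injective (by
    show dpMul n 0 x.1 = 0
    rw [dpMul_comm]; exact dpMul_zero x.1)
  mul_zero x := val_injective (dpMul_zero x.1)
  mul_assoc x y z := val_injective (dpMul_assoc x.1 y.1 z.1)
  one_mul := one_mul'
  mul_one x := by
    have : (1 : DP K n) * x = x * 1 := val_injective (dpMul_comm _ _)
    rw [← this]; exact one_mul' x
  mul_comm x y := val_injective (dpMul_comm x.1 y.1)

instance : Module K (DP K n) :=
  Function.Injective.module K
    { toFun := (Subtype.val : DP K n → (ℕ → K)), map_zero' := rfl, map_add' := fun _ _ => rfl }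
    val_injective (fun _ _ => rfl)

lemma smul_mul' (c : K) (x y : DP K n) : (c • x) * y = c • (x * y) := by
  refine val_injective ?_
  show dpMul n (c • x.1) y.1 = c • dpMul n x.1 y.1
  rw [dpMul_comm, dpMul_smul, dpMul_comm x.1 y.1]

lemma mul_smul' (c : K) (x y : DP K n) : x * (c • y) = c • (x * y) := by
  refine val_injective ?_
  exact dpMul_smul c x.1 y.1

instance [NeZero n] : Algebra K (DP K n) :=
  Algebra.ofModule smul_mul' mul_smul'

/-- The derivation on `DP K n`. -/
def der (x : DP K n) : DP K n := ⟨dpDer n x.1, dpDer_supp _⟩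

@[simp] lemma der_val (x : DP K n) : (der x).1 = dpDer n x.1 := rfl

lemma der_apply (x : DP K n) (r : ℕ) : (der x).1 r = x.1 (r + 1) := by
  show dpDer n x.1 r = x.1 (r + 1)
  unfold dpDer
  split_ifs with hr
  · rfl
  · exact (x.2 (r + 1) (by omega)).symm

lemma der_add (x y : DP K n) : der (x + y) = der x + der y := by
  refine val_injective ?_
  funext r
  show dpDer n (x.1 + y.1) r = dpDer n x.1 r + dpDer n y.1 r
  unfold dpDer
  split_ifs with hr
  · rfl
  · simp

lemma der_smul (c : K) (x : DP K n) : der (c • x) = c • der x := by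
  refine val_injective ?_
  funext r
  show dpDer n (c • x.1) r = (c • dpDer n x.1) r
  unfold dpDer
  simp only [Pi.smul_apply, smul_eq_mul]
  split_ifs with hr
  · rfl
  · simp

/-- The Pascal-type reorganization of sums used in the Leibniz rule. -/
lemma leibniz_sum (f g : ℕ → K) (r : ℕ) :
    ∑ i ∈ Finset.range (r + 1), ((r.choose i : K) * f (i + 1) * g (r - i))
      + ∑ i ∈ Finset.range (r + 1), ((r.choose i : K) * f i * g (r + 1 - i))
    = ∑ i ∈ Finset.range (r + 2), (((r + 1).choose i : K) * f i * g (r + 1 - i)) := by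
  rw [Finset.sum_range_succ' (fun i => (((r + 1).choose i : K) * f i * g (r + 1 - i))) (r + 1)]
  have pascal : ∀ i ∈ Finset.range (r + 1),
      (((r + 1).choose (i + 1) : K) * f (i + 1) * g (r + 1 - (i + 1)))
        = ((r.choose i : K) * f (i + 1) * g (r - i))
          + ((r.choose (i + 1) : K) * f (i + 1) * g (r - i)) := by
    intro i hi
    have : (r + 1).choose (i + 1) = r.choose i + r.choose (i + 1) := Nat.choose_succ_succ r i
    have hsub : r + 1 - (i + 1) = r - i := by omega
    rw [this, hsub, Nat.cast_add]
    ring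
  rw [Finset.sum_congr rfl pascal, Finset.sum_add_distrib]
  have second : ∑ i ∈ Finset.range (r + 1), ((r.choose i : K) * f i * g (r + 1 - i))
      = (∑ i ∈ Finset.range (r + 1), ((r.choose (i + 1) : K) * f (i + 1) * g (r - i)))
        + ((r.choose 0 : K) * f 0 * g (r + 1 - 0)) := by
    have ext : ∑ i ∈ Finset.range (r + 1), ((r.choose i : K) * f i * g (r + 1 - i))
        = ∑ i ∈ Finset.range (r + 2), ((r.choose i : K) * f i * g (r + 1 - i)) := by
      rw [Finset.sum_range_succ (fun i => ((r.choose i : K) * f i * g (r + 1 - i))) (r + 1)]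
      simp [Nat.choose_succ_self]
    rw [ext, Finset.sum_range_succ' (fun i => ((r.choose i : K) * f i * g (r + 1 - i))) (r + 1)]
    refine congrArg (· + _) (Finset.sum_congr rfl fun i hi => ?_)
    have : r + 1 - (i + 1) = r - i := by omega
    rw [this]
  rw [second]
  simp only [Nat.choose_zero_right, Nat.cast_one]
  ring

variable (p : ℕ)

lemma der_mul (hch : ∀ j, 0 < j → j < n → ((n.choose j : K) = 0)) (x y : DP K n) :
    der (x * y) = der x * y + x * der y := by
  refine val_injective ?_
  funext r
  show dpDer n (dpMul n x.1 y.1) r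
    = dpMul n (der x).1 y.1 r + dpMul n x.1 (der y).1 r
  have core : ∑ i ∈ Finset.range (r + 1), ((r.choose i : K) * (der x).1 i * y.1 (r - i))
      + ∑ i ∈ Finset.range (r + 1), ((r.choose i : K) * x.1 i * (der y).1 (r - i))
      = ∑ i ∈ Finset.range (r + 2), (((r + 1).choose i : K) * x.1 i * y.1 (r + 1 - i)) := by
    rw [← leibniz_sum x.1 y.1 r]
    refine congrArg₂ (· + ·) (Finset.sum_congr rfl fun i hi => by rw [der_apply])
      (Finset.sum_congr rfl fun i hi => ?_)
    have hi' : i ≤ r := by have := Finset.mem_range.1 hi; omega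
    rw [der_apply]
    have : r - i + 1 = r + 1 - i := by omega
    rw [this]
  unfold dpDer dpMul
  by_cases h1 : r + 1 < n
  · rw [if_pos h1, if_pos h1, if_pos (by omega : r < n), if_pos (by omega : r < n)]
    exact core.symm
  · rw [if_neg h1]
    by_cases h2 : r < n
    · rw [if_pos h2, if_pos h2]
      have hn : n = r + 1 := by omega
      rw [core]
      symm
      refine Finset.sum_eq_zero fun i hi => ?_
      have hi' : i < r + 2 := Finset.mem_range.1 hi
      by_cases hi0 : i = 0
      · subst hi0
        rw [y.2 (r + 1 - 0) (by omega)]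
        ring
      · by_cases hin : i = r + 1
        · subst hin
          rw [x.2 (r + 1) (by omega)]
          ring
        · have hz : (((r + 1).choose i : K)) = 0 := by
            rw [← hn]; exact hch i (by omega) (by omega)
          rw [hz]
          ring
    · rw [if_neg h2, if_neg h2]
      simp

/-- Lie derivative on the `DP` level. -/
def dLie (a : K) (h f : DP K n) : DP K n := h * der f + a • (f * der h)

/-- The operator `D` on the `DP` level. -/
def dD (a : K) (f g : DP K n) : DP K n :=
  a • (f * der (der g)) + (2 * a + 1) • (der f * der g) + (a + 1) • (der (der f) * g)

lemma main_identity [NeZero n] (hch : ∀ j, 0 < j → j < n → ((n.choose j : K) = 0))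
    (a : K) (h f g : DP K n) :
    dLie 1 h (dD a f g) = dD a (dLie a h f) g + dD a f (dLie (-1 - a) h g) := by
  simp only [dLie, dD]
  simp only [der_mul hch, der_add, der_smul, smul_add]
  simp only [Algebra.smul_def, map_add, map_mul, map_one, map_sub, map_neg, map_ofNat]
  ring

end DP

end DPAlgebra

/-- ({f(du)^a, g(du)^{-1-a}}_{P.B.})' : F_a ⊗ F_{-1-a} → F_1 is
vect(1;N)-invariant. -/
theorem derPB_invariant {K : Type*} [Field K] (p N : ℕ) (hp : p.Prime)
    (hN : 1 ≤ N) [CharP K p] (a : K) (h f g : ℕ → K)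
    (hh : dpSupp (p ^ N) h) (hf : dpSupp (p ^ N) f) (hg : dpSupp (p ^ N) g) :
    dpLie (p ^ N) 1 h (derPB (p ^ N) a f g)
      = derPB (p ^ N) a (dpLie (p ^ N) a h f) g
        + derPB (p ^ N) a f (dpLie (p ^ N) (-1 - a) h g) := by
  haveI : NeZero (p ^ N) := ⟨(pow_pos hp.pos N).ne'⟩
  have hch : ∀ j, 0 < j → j < p ^ N → (((p ^ N).choose j : K) = 0) := by
    intro j hj hj'
    have hd : p ∣ (p ^ N).choose j := Nat.Prime.dvd_choose_pow hp hj.ne' hj'.ne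
    exact (CharP.cast_eq_zero_iff K p _).2 hd
  have key := DP.main_identity (n := p ^ N) hch a ⟨h, hh⟩ ⟨f, hf⟩ ⟨g, hg⟩
  exact congrArg Subtype.val key
end
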